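/- arXiv:2104.07599 — 2 statements merged into one kernel-verified Lean document; each statement's English description precedes it below -/
import Mathlib

section
/- For a partition λ = (λ_1, ..., λ_ℓ), the generating function identity ∑_{k=0}^{ℓ} R_k(λ) [x]_{ℓ−k} = ∏_{i=1}^{ℓ} [x + λ_{ℓ−i+1} − i + 1] holds, where R_k(λ) are the Garsia–Remmel q-rook numbers, [x] = (1−q^x)/(1−q), and [x]_j = [x][x−1]···[x−j+1]. -/
open Finset

noncomputable section
open scoped Classical

variable {K : Type*} [Field K]

/-- The `q`-integer `[x] = (1 - q^x)/(1 - q)` for an integer `x`. -/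
def qInt (q : K) (x : ℤ) : K := (1 - q ^ x) / (1 - q)

/-- The falling `q`-factorial `[x]_j = [x][x-1]⋯[x-j+1]`. -/
def qFall (q : K) (x : ℤ) (j : ℕ) : K := ∏ t ∈ Finset.range j, qInt q (x - t)

/-- The `q`-factorial `[n]! = [n]_n`. -/
def qFact (q : K) (n : ℕ) : K := qFall q (n : ℤ) n

/-- The Gaussian (`q`-)binomial coefficient `[a]!/([b]! [a-b]!)`. -/
def qBinom (q : K) (a b : ℕ) : K := qFact q a / (qFact q b * qFact q (a - b))

/-- The cells of the Ferrers board of `lam` (1-indexed rows `1,…,ℓ`):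
cell `(i,j)` with `1 ≤ i ≤ ℓ` and `1 ≤ j ≤ lam i`. -/
def board (lam : ℕ → ℕ) (ℓ : ℕ) : Finset (ℕ × ℕ) :=
  ((Finset.Icc 1 ℓ) ×ˢ (Finset.Icc 1 ((Finset.Icc 1 ℓ).sup lam))).filter
    (fun c => c.2 ≤ lam c.1)

/-- Placements of `k` non-attacking rooks on the Ferrers board of `lam`. -/
def placements (lam : ℕ → ℕ) (ℓ k : ℕ) : Finset (Finset (ℕ × ℕ)) :=
  (board lam ℓ).powerset.filter
    (fun p => p.card = k ∧ ∀ a ∈ p, ∀ b ∈ p, a ≠ b → a.1 ≠ b.1 ∧ a.2 ≠ b.2)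

/-- The Garsia–Remmel inversion statistic of a rook placement `p`: the number of
cells of the board that are not occupied by a rook and not directly west
(same row, with a rook strictly to the east) or north (same column, with a rook
strictly to the south) of a rook. -/
def rInv (lam : ℕ → ℕ) (ℓ : ℕ) (p : Finset (ℕ × ℕ)) : ℕ :=
  ((board lam ℓ).filter (fun c => c ∉ p ∧
      (∀ r ∈ p, r.1 = c.1 → r.2 < c.2) ∧
      (∀ r ∈ p, r.2 = c.2 → r.1 < c.1))).card

/-- The Garsia–Remmel `q`-rook number `R_k(λ) = ∑_p q^{inv(p)}`. -/
def qRook (q : K) (lam : ℕ → ℕ) (ℓ k : ℕ) : K :=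
  ∑ p ∈ placements lam ℓ k, q ^ rInv lam ℓ p

/-- The size `|λ| = λ_1 + ⋯ + λ_ℓ`. -/
def pSize (lam : ℕ → ℕ) (ℓ : ℕ) : ℕ := ∑ i ∈ Finset.Icc 1 ℓ, lam i

/-- The `q`-hit numbers `H_k^{m,n}(λ)` of `λ ⊆ n×m`, defined from the `q`-rook
numbers by the change of basis
`H_k^{m,n}(λ) = (q^{C(k,2)-|λ|}/[m-n]!) ∑_{i=k}^{n} R_i(λ) [m-i]! qbinom(i,k) (-1)^{i+k} q^{mi-C(i,2)}`. -/
def qHit (q : K) (m n : ℕ) (lam : ℕ → ℕ) (ℓ k : ℕ) : K :=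
  (q ^ ((k.choose 2 : ℤ) - (pSize lam ℓ : ℤ)) / qFact q (m - n)) *
    ∑ i ∈ Finset.Icc k n, qRook q lam ℓ i * qFact q (m - i) * qBinom q i k *
      (-1 : K) ^ (i + k) * q ^ ((m : ℤ) * (i : ℤ) - (i.choose 2 : ℤ))

/-- `lam : ℕ → ℕ` is a partition with exactly `ℓ` (positive) parts `lam 1 ≥ ⋯ ≥ lam ℓ ≥ 1`. -/
def IsPartition (lam : ℕ → ℕ) (ℓ : ℕ) : Prop :=
  (∀ i j, 1 ≤ i → i ≤ j → lam j ≤ lam i) ∧ (∀ i, ℓ < i → lam i = 0) ∧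
    (∀ i, 1 ≤ i → i ≤ ℓ → 1 ≤ lam i)

/-- `lam` is a partition with `ℓ` parts contained in an `n × m` board. -/
def IsPartitionIn (lam : ℕ → ℕ) (ℓ n m : ℕ) : Prop :=
  IsPartition lam ℓ ∧ ℓ ≤ n ∧ lam 1 ≤ m

/-- The rectangular partition `a^b` (`b` parts equal to `a`). -/
def rect (a b : ℕ) : ℕ → ℕ := fun i => if 1 ≤ i ∧ i ≤ b then a else 0

/-- The partition obtained from `lam` by deleting its `j`-th column. -/
def delCol (lam : ℕ → ℕ) (j : ℕ) : ℕ → ℕ :=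
  fun r => if j ≤ lam r then lam r - 1 else lam r

/-- The partition obtained from `lam` by deleting its `i`-th row. -/
def delRow (lam : ℕ → ℕ) (i : ℕ) : ℕ → ℕ :=
  fun r => if r < i then lam r else lam (r + 1)

/-- The `j`-th column length `λ'_j` of `lam` (with `ℓ` rows). -/
def conjP (lam : ℕ → ℕ) (ℓ j : ℕ) : ℕ :=
  ((Finset.Icc 1 ℓ).filter (fun r => j ≤ lam r)).card

/-! Delete the first column of `λ` when every row is nonempty. A placement of `k` rooks avoiding
column 1 shifts to a placement on the smaller board, and its `ℓ - k` empty rows contribute one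
inversion each in column 1. A placement with a rook at `(i, 1)` comes from a placement of `k - 1`
rooks on the smaller board; the inversions in column 1 are the free rows below row `i`, and summing
over `i` gives `[ℓ - k + 1]`. Hence `R_k(λ) = q^{ℓ-k} R_k(λ⁻) + [ℓ-k+1] R_{k-1}(λ⁻)`, and together
with `[x+1]_m = q^m [x]_m + [m] [x]_{m-1}` this shows that the left-hand side at `(λ, x)` equals
the one at `(λ⁻, x + 1)`, as does the product. An empty last row splits off the factor `[x]`.
Induction on `ℓ` and on the last part `λ_ℓ` finishes the proof. -/

theorem qInt_add {q : K} (hq0 : q ≠ 0) (a b : ℤ) :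
    qInt q (a + b) = qInt q a + q ^ a * qInt q b := by
  rw [qInt, qInt, qInt, zpow_add₀ hq0]
  ring

theorem qInt_natCast {q : K} (hq1 : q ≠ 1) (n : ℕ) :
    qInt q n = ∑ t ∈ range n, q ^ t := by
  rw [geom_sum_eq hq1, qInt, zpow_natCast, ← neg_div_neg_eq, neg_sub, neg_sub]

theorem qFall_succ (q : K) (x : ℤ) (m : ℕ) :
    qFall q x (m + 1) = qInt q x * qFall q (x - 1) m := by
  simp only [qFall, prod_range_succ', Nat.cast_add, Nat.cast_one, Nat.cast_zero, sub_zero]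
  rw [mul_comm]
  congr 1
  exact prod_congr rfl fun t _ => by rw [sub_sub, add_comm]

theorem qFall_add_one {q : K} (hq0 : q ≠ 0) (x : ℤ) (m : ℕ) :
    qFall q (x + 1) m = q ^ m * qFall q x m + qInt q m * qFall q x (m - 1) := by
  cases m with
  | zero => simp [qFall, qInt]
  | succ m =>
    have hsplit : x + 1 = (m + 1 : ℕ) + (x - m) := by push_cast; ring
    have hlast : qFall q x (m + 1) = qFall q x m * qInt q (x - m) := prod_range_succ _ _
    rw [qFall_succ, add_sub_cancel_right, hlast, Nat.add_sub_cancel, hsplit, qInt_add hq0,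
      zpow_natCast]
    ring

theorem sum_pow_card_filter_lt {α R : Type*} [LinearOrder α] [CommSemiring R] (q : R)
    (s : Finset α) : ∑ i ∈ s, q ^ (s.filter (i < ·)).card = ∑ t ∈ range s.card, q ^ t := by
  induction s using Finset.induction_on_max with
  | empty => simp
  | insert a s ha ih =>
    have hnot : a ∉ s := fun h => lt_irrefl a (ha a h)
    have hlt : ∀ i ∈ s, (insert a s).filter (i < ·) = insert a (s.filter (i < ·)) := by
      intro i hi
      rw [filter_insert, if_pos (ha i hi)]
    have htop : (insert a s).filter (a < ·) = ∅ :=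
      filter_false_of_mem fun i hi => by
        rcases mem_insert.1 hi with rfl | hi
        · exact lt_irrefl i
        · exact not_lt.2 (ha i hi).le
    rw [sum_insert hnot, sum_congr rfl fun i hi => by
        rw [hlt i hi, card_insert_of_notMem fun h => hnot (mem_filter.1 h).1, pow_succ],
      ← sum_mul, ih, htop, card_insert_of_notMem hnot, sum_range_succ', sum_mul, card_empty,
      pow_zero, add_comm]
    simp only [pow_succ]

theorem mem_board {lam : ℕ → ℕ} {ℓ : ℕ} {c : ℕ × ℕ} :
    c ∈ board lam ℓ ↔ 1 ≤ c.1 ∧ c.1 ≤ ℓ ∧ 1 ≤ c.2 ∧ c.2 ≤ lam c.1 := by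
  simp only [board, mem_filter, mem_product, mem_Icc]
  constructor
  · rintro ⟨⟨⟨h1, h2⟩, h3, -⟩, h4⟩
    exact ⟨h1, h2, h3, h4⟩
  · rintro ⟨h1, h2, h3, h4⟩
    exact ⟨⟨⟨h1, h2⟩, h3, h4.trans (le_sup (mem_Icc.2 ⟨h1, h2⟩))⟩, h4⟩

theorem snd_ne_zero_of_mem_board {lam : ℕ → ℕ} {ℓ : ℕ} {c : ℕ × ℕ} (hc : c ∈ board lam ℓ) :
    c.2 ≠ 0 :=
  Nat.one_le_iff_ne_zero.1 (mem_board.1 hc).2.2.1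

def NonAttacking (p : Finset (ℕ × ℕ)) : Prop :=
  ∀ a ∈ p, ∀ b ∈ p, a ≠ b → a.1 ≠ b.1 ∧ a.2 ≠ b.2

theorem mem_placements {lam : ℕ → ℕ} {ℓ k : ℕ} {p : Finset (ℕ × ℕ)} :
    p ∈ placements lam ℓ k ↔ p ⊆ board lam ℓ ∧ p.card = k ∧ NonAttacking p := by
  rw [placements, mem_filter, mem_powerset, NonAttacking]

theorem snd_ne_zero_of_mem_placements {lam : ℕ → ℕ} {ℓ k : ℕ} {p : Finset (ℕ × ℕ)}
    (hp : p ∈ placements lam ℓ k) : ∀ c ∈ p, c.2 ≠ 0 := fun _ hc =>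
  snd_ne_zero_of_mem_board ((mem_placements.1 hp).1 hc)

theorem card_image_fst_of_mem_placements {lam : ℕ → ℕ} {ℓ k : ℕ} {p : Finset (ℕ × ℕ)}
    (hp : p ∈ placements lam ℓ k) : (p.image Prod.fst).card = k := by
  obtain ⟨-, hcard, hna⟩ := mem_placements.1 hp
  rw [card_image_of_injOn fun a ha b hb hab => by_contra fun hne => (hna a ha b hb hne).1 hab,
    hcard]

theorem image_fst_subset_of_mem_placements {lam : ℕ → ℕ} {ℓ k : ℕ} {p : Finset (ℕ × ℕ)}
    (hp : p ∈ placements lam ℓ k) : p.image Prod.fst ⊆ Icc 1 ℓ := by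
  intro i hi
  obtain ⟨c, hc, rfl⟩ := mem_image.1 hi
  have := mem_board.1 ((mem_placements.1 hp).1 hc)
  exact mem_Icc.2 ⟨this.1, this.2.1⟩

theorem qRook_eq_zero_of_lt (q : K) (lam : ℕ → ℕ) {ℓ k : ℕ} (h : ℓ < k) :
    qRook q lam ℓ k = 0 := by
  refine sum_eq_zero fun p hp => absurd (card_le_card (image_fst_subset_of_mem_placements hp)) ?_
  rw [card_image_fst_of_mem_placements hp, Nat.card_Icc]
  omega

def freeRows (ℓ : ℕ) (p : Finset (ℕ × ℕ)) : Finset ℕ := Icc 1 ℓ \ p.image Prod.fst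

theorem card_freeRows {lam : ℕ → ℕ} {ℓ k : ℕ} {p : Finset (ℕ × ℕ)}
    (hp : p ∈ placements lam ℓ k) : (freeRows ℓ p).card = ℓ - k := by
  rw [freeRows, card_sdiff_of_subset (image_fst_subset_of_mem_placements hp),
    card_image_fst_of_mem_placements hp, Nat.card_Icc, Nat.add_sub_cancel]

def shiftCol (p : Finset (ℕ × ℕ)) : Finset (ℕ × ℕ) :=
  p.map ((Function.Embedding.refl ℕ).prodMap ⟨Nat.succ, Nat.succ_injective⟩)

def unshiftCol (p : Finset (ℕ × ℕ)) : Finset (ℕ × ℕ) :=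
  p.image fun c => (c.1, c.2 - 1)

theorem mem_shiftCol {p : Finset (ℕ × ℕ)} {c : ℕ × ℕ} :
    c ∈ shiftCol p ↔ ∃ d ∈ p, (d.1, d.2 + 1) = c := by
  simp [shiftCol]

@[simp]
theorem mk_add_one_mem_shiftCol {p : Finset (ℕ × ℕ)} {a b : ℕ} :
    (a, b + 1) ∈ shiftCol p ↔ (a, b) ∈ p := by
  simp [shiftCol]

theorem mk_one_notMem_shiftCol {p : Finset (ℕ × ℕ)} (hp : ∀ c ∈ p, c.2 ≠ 0) (a : ℕ) :
    (a, 1) ∉ shiftCol p := fun h => hp _ (mk_add_one_mem_shiftCol.1 h) rfl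

theorem card_shiftCol (p : Finset (ℕ × ℕ)) : (shiftCol p).card = p.card := card_map _

theorem image_fst_shiftCol (p : Finset (ℕ × ℕ)) :
    (shiftCol p).image Prod.fst = p.image Prod.fst := by
  rw [shiftCol, map_eq_image, image_image]
  rfl

theorem unshiftCol_shiftCol (p : Finset (ℕ × ℕ)) : unshiftCol (shiftCol p) = p := by
  rw [unshiftCol, shiftCol, map_eq_image, image_image]
  exact image_id'

theorem shiftCol_unshiftCol {p : Finset (ℕ × ℕ)} (hp : ∀ c ∈ p, c.2 ≠ 0) :
    shiftCol (unshiftCol p) = p := by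
  rw [unshiftCol, shiftCol, map_eq_image, image_image]
  refine (image_congr fun c hc => ?_).trans image_id
  have := hp c hc
  exact Prod.ext rfl (Nat.sub_add_cancel (Nat.one_le_iff_ne_zero.2 this))

theorem nonAttacking_shiftCol {p : Finset (ℕ × ℕ)} :
    NonAttacking (shiftCol p) ↔ NonAttacking p := by
  simp only [NonAttacking, shiftCol, forall_mem_map, ne_eq, EmbeddingLike.apply_eq_iff_eq]
  simp [Function.Embedding.prodMap]

theorem delCol_one_apply (lam : ℕ → ℕ) (r : ℕ) : delCol lam 1 r = lam r - 1 := by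
  unfold delCol
  split_ifs <;> omega

theorem shiftCol_mem_placements_iff {lam : ℕ → ℕ} {ℓ k : ℕ} {p : Finset (ℕ × ℕ)}
    (hp : ∀ c ∈ p, c.2 ≠ 0) :
    shiftCol p ∈ placements lam ℓ k ↔ p ∈ placements (delCol lam 1) ℓ k := by
  have hboard : shiftCol p ⊆ board lam ℓ ↔ p ⊆ board (delCol lam 1) ℓ := by
    simp only [subset_iff, shiftCol, forall_mem_map]
    refine forall₂_congr fun c hc => ?_
    simp only [Function.Embedding.prodMap, Function.Embedding.coeFn_mk, Prod.map,
      Function.Embedding.refl_apply, mem_board, delCol_one_apply]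
    have := hp c hc
    omega
  rw [mem_placements, mem_placements, hboard, card_shiftCol, nonAttacking_shiftCol]

theorem board_eq_union {lam : ℕ → ℕ} {ℓ : ℕ} (hlam : ∀ i ∈ Icc 1 ℓ, 1 ≤ lam i) :
    board lam ℓ = Icc 1 ℓ ×ˢ {1} ∪ shiftCol (board (delCol lam 1) ℓ) := by
  ext ⟨a, b⟩
  cases b with
  | zero => simp [mem_board, mem_shiftCol]
  | succ b =>
    simp only [mem_union, mem_product, mem_Icc, mem_singleton, mk_add_one_mem_shiftCol,
      mem_board, delCol_one_apply]
    have := fun h => hlam a (mem_Icc.2 h)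
    omega

theorem disjoint_product_one_shiftCol (s : Finset ℕ) {p : Finset (ℕ × ℕ)}
    (hp : ∀ c ∈ p, c.2 ≠ 0) : Disjoint (s ×ˢ {1}) (shiftCol p) := by
  refine disjoint_left.2 fun c hc hc' => ?_
  obtain ⟨d, hd, rfl⟩ := mem_shiftCol.1 hc'
  have := hp d hd
  simp only [mem_product, mem_singleton] at hc
  omega

theorem forall_mem_shiftCol {P : ℕ × ℕ → Prop} {p : Finset (ℕ × ℕ)} :
    (∀ c ∈ shiftCol p, P c) ↔ ∀ c ∈ p, P (c.1, c.2 + 1) := forall_mem_map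

theorem forall_mem_product_one {P : ℕ × ℕ → Prop} {s : Finset ℕ} :
    (∀ c ∈ s ×ˢ {1}, P c) ↔ ∀ i ∈ s, P (i, 1) := by
  simp

theorem card_filter_shiftCol (P : ℕ × ℕ → Prop) [DecidablePred P] (p : Finset (ℕ × ℕ)) :
    ((shiftCol p).filter P).card = (p.filter fun c => P (c.1, c.2 + 1)).card := by
  rw [shiftCol, filter_map, card_map]
  rfl

def IsInvCell (p : Finset (ℕ × ℕ)) (c : ℕ × ℕ) : Prop :=
  c ∉ p ∧ (∀ r ∈ p, r.1 = c.1 → r.2 < c.2) ∧ (∀ r ∈ p, r.2 = c.2 → r.1 < c.1)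

theorem rInv_eq_card_filter (lam : ℕ → ℕ) (ℓ : ℕ) (p : Finset (ℕ × ℕ)) :
    rInv lam ℓ p = ((board lam ℓ).filter (IsInvCell p)).card := by
  rw [rInv]
  congr

theorem isInvCell_union_shiftCol_mk_one (s : Finset ℕ) {p : Finset (ℕ × ℕ)}
    (hp : ∀ c ∈ p, c.2 ≠ 0) (i : ℕ) :
    IsInvCell (s ×ˢ {1} ∪ shiftCol p) (i, 1) ↔ i ∉ p.image Prod.fst ∧ ∀ j ∈ s, j < i := by
  simp only [IsInvCell, forall_mem_union, forall_mem_product_one, forall_mem_shiftCol]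
  simp only [mk_one_notMem_shiftCol hp, mem_union, mem_product, mem_singleton, and_true, or_false,
    mem_image, not_exists, not_and, forall_const]
  constructor
  · rintro ⟨-, ⟨-, hrow⟩, hlt, -⟩
    exact ⟨fun c hc hci => absurd (hrow c hc hci) (by omega), hlt⟩
  · rintro ⟨hrow, hlt⟩
    have hi : i ∉ s := fun h => lt_irrefl i (hlt i h)
    exact ⟨hi, ⟨fun j hj hji => absurd (hji ▸ hj) hi, fun c hc hci => absurd hci (hrow c hc)⟩,
      hlt, fun c hc h => absurd (Nat.succ_inj.1 h) (hp c hc)⟩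

theorem isInvCell_union_shiftCol_mk_add_one (s : Finset ℕ) (p : Finset (ℕ × ℕ)) {a b : ℕ}
    (hb : b ≠ 0) : IsInvCell (s ×ˢ {1} ∪ shiftCol p) (a, b + 1) ↔ IsInvCell p (a, b) := by
  simp only [IsInvCell, forall_mem_union, forall_mem_product_one, forall_mem_shiftCol]
  simp [hb, Nat.pos_iff_ne_zero]

theorem rInv_union_shiftCol {lam : ℕ → ℕ} {ℓ : ℕ} (hlam : ∀ i ∈ Icc 1 ℓ, 1 ≤ lam i)
    (s : Finset ℕ) {p : Finset (ℕ × ℕ)} (hp : ∀ c ∈ p, c.2 ≠ 0) :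
    rInv lam ℓ (s ×ˢ {1} ∪ shiftCol p) =
      ((freeRows ℓ p).filter fun i => ∀ j ∈ s, j < i).card + rInv (delCol lam 1) ℓ p := by
  have hcol : (Icc 1 ℓ ×ˢ {1}).filter (IsInvCell (s ×ˢ {1} ∪ shiftCol p)) =
      ((freeRows ℓ p).filter fun i => ∀ j ∈ s, j < i) ×ˢ {1} := by
    ext ⟨a, b⟩
    simp only [mem_filter, mem_product, mem_singleton, freeRows, mem_sdiff]
    constructor
    · rintro ⟨⟨ha, rfl⟩, h⟩
      obtain ⟨hrow, hlt⟩ := (isInvCell_union_shiftCol_mk_one s hp a).1 h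
      exact ⟨⟨⟨ha, hrow⟩, hlt⟩, rfl⟩
    · rintro ⟨⟨⟨ha, hrow⟩, hlt⟩, rfl⟩
      exact ⟨⟨ha, rfl⟩, (isInvCell_union_shiftCol_mk_one s hp a).2 ⟨hrow, hlt⟩⟩
  have hshift : (board (delCol lam 1) ℓ).filter
      (fun c => IsInvCell (s ×ˢ {1} ∪ shiftCol p) (c.1, c.2 + 1)) =
      (board (delCol lam 1) ℓ).filter (IsInvCell p) :=
    filter_congr fun c hc => isInvCell_union_shiftCol_mk_add_one s p (snd_ne_zero_of_mem_board hc)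
  have hdisj := disjoint_product_one_shiftCol (Icc 1 ℓ) (p := board (delCol lam 1) ℓ)
    fun _ => snd_ne_zero_of_mem_board
  rw [rInv_eq_card_filter, rInv_eq_card_filter, board_eq_union hlam, filter_union,
    card_union_of_disjoint (hdisj.mono (filter_subset _ _) (filter_subset _ _)),
    card_filter_shiftCol, hcol, hshift, card_product, card_singleton, mul_one]

theorem rInv_shiftCol {lam : ℕ → ℕ} {ℓ : ℕ} (hlam : ∀ i ∈ Icc 1 ℓ, 1 ≤ lam i)
    {p : Finset (ℕ × ℕ)} (hp : ∀ c ∈ p, c.2 ≠ 0) :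
    rInv lam ℓ (shiftCol p) = (freeRows ℓ p).card + rInv (delCol lam 1) ℓ p := by
  simpa using rInv_union_shiftCol hlam ∅ hp

theorem rInv_insert_shiftCol {lam : ℕ → ℕ} {ℓ : ℕ} (hlam : ∀ i ∈ Icc 1 ℓ, 1 ≤ lam i)
    (i : ℕ) {p : Finset (ℕ × ℕ)} (hp : ∀ c ∈ p, c.2 ≠ 0) :
    rInv lam ℓ (insert (i, 1) (shiftCol p)) =
      ((freeRows ℓ p).filter (i < ·)).card + rInv (delCol lam 1) ℓ p := by
  simpa [← insert_eq] using rInv_union_shiftCol hlam {i} hp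

theorem NonAttacking.insert {p : Finset (ℕ × ℕ)} {a : ℕ × ℕ} (hp : NonAttacking p)
    (ha : ∀ b ∈ p, a.1 ≠ b.1 ∧ a.2 ≠ b.2) : NonAttacking (insert a p) := by
  intro x hx y hy hxy
  rcases mem_insert.1 hx with rfl | hxp <;> rcases mem_insert.1 hy with rfl | hyp
  · exact absurd rfl hxy
  · exact ha y hyp
  · exact (ha x hxp).imp Ne.symm Ne.symm
  · exact hp x hxp y hyp hxy

theorem erase_mem_placements {lam : ℕ → ℕ} {ℓ k : ℕ} {p : Finset (ℕ × ℕ)} {c : ℕ × ℕ}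
    (hp : p ∈ placements lam ℓ (k + 1)) (hc : c ∈ p) : p.erase c ∈ placements lam ℓ k := by
  obtain ⟨hboard, hcard, hna⟩ := mem_placements.1 hp
  refine mem_placements.2 ⟨(erase_subset c p).trans hboard, ?_, fun a ha b hb =>
    hna a (mem_of_mem_erase ha) b (mem_of_mem_erase hb)⟩
  rw [card_erase_of_mem hc, hcard, Nat.add_sub_cancel]

theorem unshiftCol_mem_placements {lam : ℕ → ℕ} {ℓ k : ℕ} {p : Finset (ℕ × ℕ)}
    (hp : p ∈ placements lam ℓ k) (hcol : ∀ c ∈ p, c.2 ≠ 1) :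
    unshiftCol p ∈ placements (delCol lam 1) ℓ k := by
  have hpos := snd_ne_zero_of_mem_placements hp
  rw [← shiftCol_unshiftCol hpos] at hp
  refine (shiftCol_mem_placements_iff ?_).1 hp
  intro c hc
  obtain ⟨d, hd, rfl⟩ := mem_image.1 hc
  have := hpos d hd
  have := hcol d hd
  dsimp only
  omega

theorem insert_shiftCol_mem_placements {lam : ℕ → ℕ} {ℓ k i : ℕ}
    (hlam : ∀ i ∈ Icc 1 ℓ, 1 ≤ lam i) {p : Finset (ℕ × ℕ)}
    (hp : p ∈ placements (delCol lam 1) ℓ k) (hi : i ∈ freeRows ℓ p) :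
    insert (i, 1) (shiftCol p) ∈ placements lam ℓ (k + 1) := by
  have hpos := snd_ne_zero_of_mem_placements hp
  obtain ⟨hboard, hcard, hna⟩ := mem_placements.1 ((shiftCol_mem_placements_iff hpos).2 hp)
  obtain ⟨hi, hrow⟩ := mem_sdiff.1 hi
  refine mem_placements.2 ⟨insert_subset (mem_board.2 ?_) hboard, ?_, hna.insert ?_⟩
  · have := mem_Icc.1 hi
    exact ⟨this.1, this.2, le_rfl, hlam i hi⟩
  · rw [card_insert_of_notMem (mk_one_notMem_shiftCol hpos i), hcard]
  · rw [forall_mem_shiftCol]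
    intro c hc
    refine ⟨fun h => hrow (mem_image.2 ⟨c, hc, h.symm⟩), ?_⟩
    have := hpos c hc
    dsimp only
    omega

theorem sum_placements_filter_not_col_one (q : K) {lam : ℕ → ℕ} {ℓ : ℕ}
    (hlam : ∀ i ∈ Icc 1 ℓ, 1 ≤ lam i) (k : ℕ) :
    ∑ p ∈ (placements lam ℓ k).filter (fun p => ¬ ∃ i, (i, 1) ∈ p), q ^ rInv lam ℓ p =
      q ^ (ℓ - k) * qRook q (delCol lam 1) ℓ k := by
  have hcol : ∀ p ∈ (placements lam ℓ k).filter (fun p => ¬ ∃ i, (i, 1) ∈ p),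
      ∀ c ∈ p, c.2 ≠ 1 := fun p hp c hc h1 =>
    (mem_filter.1 hp).2 ⟨c.1, by rwa [← h1]⟩
  rw [qRook, mul_sum]
  symm
  refine sum_nbij' shiftCol unshiftCol (fun p hp => ?_) (fun p hp => ?_)
    (fun p _ => unshiftCol_shiftCol p) (fun p hp => ?_) (fun p hp => ?_)
  · have hpos := snd_ne_zero_of_mem_placements hp
    exact mem_filter.2 ⟨(shiftCol_mem_placements_iff hpos).2 hp,
      fun ⟨i, hi⟩ => mk_one_notMem_shiftCol hpos i hi⟩
  · exact unshiftCol_mem_placements (mem_filter.1 hp).1 (hcol p hp)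
  · exact shiftCol_unshiftCol (snd_ne_zero_of_mem_placements (mem_filter.1 hp).1)
  · rw [rInv_shiftCol hlam (snd_ne_zero_of_mem_placements hp), card_freeRows hp, pow_add]

theorem insert_mk_one_shiftCol_inj {p p' : Finset (ℕ × ℕ)} (hp : ∀ c ∈ p, c.2 ≠ 0)
    (hp' : ∀ c ∈ p', c.2 ≠ 0) {i j : ℕ}
    (h : insert (i, 1) (shiftCol p) = insert (j, 1) (shiftCol p')) : i = j ∧ p = p' := by
  have hij : i = j := by
    have hi : (i, 1) ∈ insert (j, 1) (shiftCol p') := h ▸ mem_insert_self _ _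
    rcases mem_insert.1 hi with hi | hi
    · exact (Prod.mk.inj hi).1
    · exact absurd hi (mk_one_notMem_shiftCol hp' i)
  subst hij
  have hshift := congrArg (·.erase (i, 1)) h
  simp only [erase_insert (mk_one_notMem_shiftCol hp i),
    erase_insert (mk_one_notMem_shiftCol hp' i)] at hshift
  exact ⟨rfl, map_injective _ hshift⟩

theorem exists_insert_shiftCol_eq {lam : ℕ → ℕ} {ℓ k i : ℕ} {p : Finset (ℕ × ℕ)}
    (hp : p ∈ placements lam ℓ (k + 1)) (hi : (i, 1) ∈ p) :
    ∃ p' ∈ placements (delCol lam 1) ℓ k, i ∈ freeRows ℓ p' ∧ insert (i, 1) (shiftCol p') = p := by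
  have hna := (mem_placements.1 hp).2.2
  have hother : ∀ c ∈ p.erase (i, 1), c.1 ≠ i ∧ c.2 ≠ 1 := fun c hc =>
    hna c (mem_of_mem_erase hc) (i, 1) hi (ne_of_mem_erase hc)
  have herase := erase_mem_placements hp hi
  have hshift := shiftCol_unshiftCol (snd_ne_zero_of_mem_placements herase)
  refine ⟨unshiftCol (p.erase (i, 1)),
    unshiftCol_mem_placements herase fun c hc => (hother c hc).2, mem_sdiff.2 ⟨?_, ?_⟩, ?_⟩
  · have := mem_board.1 ((mem_placements.1 hp).1 hi)
    exact mem_Icc.2 ⟨this.1, this.2.1⟩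
  · rw [← image_fst_shiftCol, hshift]
    intro hmem
    obtain ⟨c, hc, hci⟩ := mem_image.1 hmem
    exact (hother c hc).1 hci
  · rw [hshift, insert_erase hi]

theorem sum_placements_filter_col_one {q : K} (hq1 : q ≠ 1) {lam : ℕ → ℕ} {ℓ : ℕ}
    (hlam : ∀ i ∈ Icc 1 ℓ, 1 ≤ lam i) (k : ℕ) :
    ∑ p ∈ (placements lam ℓ (k + 1)).filter (fun p => ∃ i, (i, 1) ∈ p), q ^ rInv lam ℓ p =
      qInt q (ℓ - k : ℕ) * qRook q (delCol lam 1) ℓ k := by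
  have hfiber : ∀ p ∈ placements (delCol lam 1) ℓ k,
      qInt q (ℓ - k : ℕ) * q ^ rInv (delCol lam 1) ℓ p =
        ∑ i ∈ freeRows ℓ p, q ^ rInv lam ℓ (insert (i, 1) (shiftCol p)) := by
    intro p hp
    simp_rw [rInv_insert_shiftCol hlam _ (snd_ne_zero_of_mem_placements hp), pow_add]
    rw [← sum_mul, sum_pow_card_filter_lt, card_freeRows hp, qInt_natCast hq1]
  rw [qRook, mul_sum, sum_congr rfl hfiber, ← sum_sigma _ (freeRows ℓ)
    (fun x => q ^ rInv lam ℓ (insert (x.2, 1) (shiftCol x.1)))]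
  symm
  refine sum_nbij (fun x => insert (x.2, 1) (shiftCol x.1)) ?_ ?_ ?_ (fun _ _ => rfl)
  · rintro ⟨p, i⟩ hpi
    obtain ⟨hp, hi⟩ := mem_sigma.1 hpi
    exact mem_filter.2 ⟨insert_shiftCol_mem_placements hlam hp hi, i, mem_insert_self _ _⟩
  · rintro ⟨p, i⟩ hpi ⟨p', j⟩ hpj h
    obtain ⟨rfl, rfl⟩ : i = j ∧ p = p' := insert_mk_one_shiftCol_inj
      (snd_ne_zero_of_mem_placements (mem_sigma.1 hpi).1)
      (snd_ne_zero_of_mem_placements (mem_sigma.1 hpj).1) h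
    rfl
  · intro p hp
    obtain ⟨hp, i, hi⟩ := mem_filter.1 hp
    obtain ⟨p', hp', hi', rfl⟩ := exists_insert_shiftCol_eq hp hi
    exact ⟨⟨p', i⟩, mem_sigma.2 ⟨hp', hi'⟩, rfl⟩

theorem qRook_zero_eq_delCol (q : K) {lam : ℕ → ℕ} {ℓ : ℕ}
    (hlam : ∀ i ∈ Icc 1 ℓ, 1 ≤ lam i) :
    qRook q lam ℓ 0 = q ^ ℓ * qRook q (delCol lam 1) ℓ 0 := by
  have hnone : (placements lam ℓ 0).filter (fun p => ∃ i, (i, 1) ∈ p) = ∅ :=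
    filter_false_of_mem fun p hp ⟨i, hi⟩ => by
      rw [card_eq_zero.1 (mem_placements.1 hp).2.1] at hi
      exact notMem_empty _ hi
  rw [qRook, ← sum_filter_add_sum_filter_not _ (fun p => ∃ i, (i, 1) ∈ p), hnone, sum_empty,
    zero_add, sum_placements_filter_not_col_one q hlam, Nat.sub_zero]

theorem qRook_succ_eq_delCol {q : K} (hq1 : q ≠ 1) {lam : ℕ → ℕ} {ℓ : ℕ}
    (hlam : ∀ i ∈ Icc 1 ℓ, 1 ≤ lam i) (k : ℕ) :
    qRook q lam ℓ (k + 1) = q ^ (ℓ - (k + 1)) * qRook q (delCol lam 1) ℓ (k + 1) +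
      qInt q (ℓ - k : ℕ) * qRook q (delCol lam 1) ℓ k := by
  rw [qRook, ← sum_filter_not_add_sum_filter _ (fun p => ∃ i, (i, 1) ∈ p),
    sum_placements_filter_not_col_one q hlam, sum_placements_filter_col_one hq1 hlam]

def qRookSum (q : K) (lam : ℕ → ℕ) (ℓ : ℕ) (x : ℤ) : K :=
  ∑ k ∈ range (ℓ + 1), qRook q lam ℓ k * qFall q x (ℓ - k)

theorem qRookSum_eq_delCol {q : K} (hq0 : q ≠ 0) (hq1 : q ≠ 1) {lam : ℕ → ℕ} {ℓ : ℕ}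
    (hlam : ∀ i ∈ Icc 1 ℓ, 1 ≤ lam i) (x : ℤ) :
    qRookSum q lam ℓ x = qRookSum q (delCol lam 1) ℓ (x + 1) := by
  let b := qRook q (delCol lam 1) ℓ
  have hexpand : qRookSum q (delCol lam 1) ℓ (x + 1) =
      ∑ k ∈ range (ℓ + 1), q ^ (ℓ - k) * b k * qFall q x (ℓ - k) +
        ∑ k ∈ range (ℓ + 1), qInt q (ℓ - k : ℕ) * b k * qFall q x (ℓ - (k + 1)) := by
    rw [qRookSum, ← sum_add_distrib]
    refine sum_congr rfl fun k _ => ?_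
    rw [qFall_add_one hq0, Nat.sub_sub]
    ring
  have hlast : qInt q (ℓ - ℓ : ℕ) = 0 := by simp [qInt]
  rw [hexpand, qRookSum, sum_range_succ', sum_range_succ' (fun k => q ^ (ℓ - k) * b k * _),
    sum_range_succ (fun k => qInt q (ℓ - k : ℕ) * b k * _), hlast, qRook_zero_eq_delCol q hlam]
  simp only [b, qRook_succ_eq_delCol hq1 hlam, add_mul, sum_add_distrib, Nat.sub_zero]
  ring

theorem board_zero (lam : ℕ → ℕ) : board lam 0 = ∅ :=
  eq_empty_of_forall_notMem fun c hc => by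
    have := mem_board.1 hc
    omega

theorem board_succ_of_eq_zero {lam : ℕ → ℕ} {ℓ : ℕ} (h : lam (ℓ + 1) = 0) :
    board lam (ℓ + 1) = board lam ℓ := by
  ext c
  simp only [mem_board]
  constructor
  · rintro ⟨h1, h2, h3, h4⟩
    refine ⟨h1, Nat.le_of_lt_succ (lt_of_le_of_ne h2 fun he => ?_), h3, h4⟩
    rw [he, h] at h4
    omega
  · rintro ⟨h1, h2, h3, h4⟩
    exact ⟨h1, h2.trans (Nat.le_succ ℓ), h3, h4⟩

theorem placements_zero_zero (lam : ℕ → ℕ) : placements lam 0 0 = {∅} := by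
  ext p
  rw [mem_placements, board_zero, subset_empty, mem_singleton]
  constructor
  · exact fun h => h.1
  · rintro rfl
    exact ⟨rfl, rfl, by simp [NonAttacking]⟩

theorem qRookSum_succ_of_eq_zero (q : K) {lam : ℕ → ℕ} {ℓ : ℕ} (h : lam (ℓ + 1) = 0)
    (x : ℤ) : qRookSum q lam (ℓ + 1) x = qInt q x * qRookSum q lam ℓ (x - 1) := by
  have hstrip : ∀ k, qRook q lam (ℓ + 1) k = qRook q lam ℓ k := by
    simp only [qRook, placements, rInv, board_succ_of_eq_zero h, implies_true]
  rw [qRookSum, qRookSum, sum_range_succ, hstrip, qRook_eq_zero_of_lt q lam (Nat.lt_succ_self ℓ),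
    zero_mul, add_zero, mul_sum]
  refine sum_congr rfl fun k hk => ?_
  rw [hstrip, Nat.sub_add_comm (Nat.le_of_lt_succ (mem_range.1 hk)), qFall_succ]
  ring

theorem qRookSum_eq_prod {q : K} (hq0 : q ≠ 0) (hq1 : q ≠ 1) (ℓ : ℕ) :
    ∀ lam : ℕ → ℕ, AntitoneOn lam (Set.Icc 1 ℓ) → ∀ x : ℤ,
      qRookSum q lam ℓ x = ∏ i ∈ Icc 1 ℓ, qInt q (x + lam i + i - ℓ) := by
  induction ℓ with
  | zero => simp [qRookSum, qRook, placements_zero_zero, rInv, board_zero, qFall]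
  | succ ℓ ih =>
    suffices ∀ m lam, lam (ℓ + 1) = m → AntitoneOn lam (Set.Icc 1 (ℓ + 1)) → ∀ x : ℤ,
        qRookSum q lam (ℓ + 1) x = ∏ i ∈ Icc 1 (ℓ + 1), qInt q (x + lam i + i - (ℓ + 1 : ℕ))
      from fun lam => this _ lam rfl
    intro m
    induction m with
    | zero =>
      intro lam h0 hanti x
      rw [qRookSum_succ_of_eq_zero q h0,
        ih lam (hanti.mono (Set.Icc_subset_Icc_right (Nat.le_succ ℓ))) (x - 1),
        prod_Icc_succ_top (Nat.le_add_left 1 ℓ), h0, mul_comm]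
      congr 1
      · exact prod_congr rfl fun i _ => by push_cast; ring_nf
      · push_cast; ring_nf
    | succ m ihm =>
      intro lam hm hanti x
      have hlam : ∀ i ∈ Icc 1 (ℓ + 1), 1 ≤ lam i := fun i hi => by
        have := hanti (Set.mem_Icc.2 (mem_Icc.1 hi)) (Set.mem_Icc.2 ⟨Nat.le_add_left 1 ℓ, le_rfl⟩)
          (mem_Icc.1 hi).2
        omega
      have hanti' : AntitoneOn (delCol lam 1) (Set.Icc 1 (ℓ + 1)) := fun i hi j hj hij => by
        simp only [delCol_one_apply]
        exact Nat.sub_le_sub_right (hanti hi hj hij) 1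
      rw [qRookSum_eq_delCol hq0 hq1 hlam,
        ihm (delCol lam 1) (by rw [delCol_one_apply, hm, Nat.add_sub_cancel]) hanti' (x + 1)]
      refine prod_congr rfl fun i hi => ?_
      rw [delCol_one_apply, Nat.cast_sub (hlam i hi)]
      push_cast
      ring_nf

/-- Garsia–Remmel generating function identity:
`∑_{k=0}^{ℓ} R_k(λ) [x]_{ℓ-k} = ∏_{i=1}^{ℓ} [x + λ_{ℓ-i+1} - i + 1]`. -/
theorem stmt0 (q : K) (hq0 : q ≠ 0) (hq1 : ∀ j : ℕ, 0 < j → q ^ j ≠ 1)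
    (lam : ℕ → ℕ) (ℓ : ℕ) (hpart : IsPartition lam ℓ) (x : ℤ) :
    ∑ k ∈ Finset.range (ℓ + 1), qRook q lam ℓ k * qFall q x (ℓ - k) =
      ∏ i ∈ Finset.Icc 1 ℓ, qInt q (x + (lam (ℓ - i + 1) : ℤ) - (i : ℤ) + 1) := by
  have hq1' : q ≠ 1 := by simpa using hq1 1 one_pos
  have hanti : AntitoneOn lam (Set.Icc 1 ℓ) := fun i hi j _ hij => hpart.1 i j hi.1 hij
  change qRookSum q lam ℓ x = _
  rw [qRookSum_eq_prod hq0 hq1' ℓ lam hanti x]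
  refine prod_nbij' (fun i => ℓ + 1 - i) (fun i => ℓ + 1 - i) ?_ ?_ ?_ ?_ ?_ <;>
    intro i hi <;> simp only [mem_Icc] at hi ⊢
  iterate 4 omega
  · rw [show ℓ - (ℓ + 1 - i) + 1 = i by omega, Nat.cast_sub (by omega)]
    push_cast
    ring_nf
end
end

section
/- For a partition λ inside an n×m board (n ≤ m) with k = ℓ(λ), the q-hit numbers satisfy: qbinom(m−k, n−k) · H_k^{m+n−k,m+n−k}(λ) = q^{k(n−k)} · [m+n−2k]_{m−k} · H_k^{m,n}(λ). -/
open Finset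

noncomputable section
open scoped Classical

variable {K : Type*} [Field K]

lemma aux_qInt_ne_zero (q : K) (hq1 : ∀ j : ℕ, 0 < j → q ^ j ≠ 1) (x : ℤ) (hx : 0 < x) :
    qInt q x ≠ 0 := by
  unfold qInt
  have hx' : x = (x.toNat : ℤ) := (Int.toNat_of_nonneg hx.le).symm
  apply div_ne_zero
  · rw [hx', zpow_natCast]
    exact sub_ne_zero_of_ne (Ne.symm (hq1 x.toNat (by omega)))
  · exact sub_ne_zero_of_ne (Ne.symm (by simpa using hq1 1 one_pos))

lemma aux_qFall_ne_zero (q : K) (hq1 : ∀ j : ℕ, 0 < j → q ^ j ≠ 1) (x : ℤ) (j : ℕ)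
    (hj : (j : ℤ) ≤ x) : qFall q x j ≠ 0 := by
  unfold qFall
  rw [Finset.prod_ne_zero_iff]
  intro t ht
  have ht' : (t : ℤ) < j := by exact_mod_cast Finset.mem_range.mp ht
  exact aux_qInt_ne_zero q hq1 _ (by omega)

lemma aux_qFact_ne_zero (q : K) (hq1 : ∀ j : ℕ, 0 < j → q ^ j ≠ 1) (n : ℕ) :
    qFact q n ≠ 0 :=
  aux_qFall_ne_zero q hq1 _ _ le_rfl

lemma aux_qFall_add (q : K) (x : ℤ) (a b : ℕ) :
    qFall q x (a + b) = qFall q x a * qFall q (x - a) b := by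
  unfold qFall
  rw [Finset.prod_range_add]
  congr 1
  refine Finset.prod_congr rfl fun t _ => ?_
  congr 1
  push_cast
  ring

lemma aux_qRook_eq_zero (q : K) (lam : ℕ → ℕ) (k i : ℕ) (hi : k < i) :
    qRook q lam k i = 0 := by
  unfold qRook
  apply Finset.sum_eq_zero
  intro p hp
  exfalso
  rw [placements, Finset.mem_filter, Finset.mem_powerset] at hp
  obtain ⟨hsub, hcard, hnat⟩ := hp
  have hinj : Set.InjOn Prod.fst (p : Set (ℕ × ℕ)) := by
    intro a ha b hb hab
    by_contra hne
    exact (hnat a ha b hb hne).1 hab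
  have h1 : (p.image Prod.fst).card = p.card := Finset.card_image_of_injOn hinj
  have h2 : p.image Prod.fst ⊆ Finset.Icc 1 k := by
    intro r hr
    obtain ⟨a, ha, rfl⟩ := Finset.mem_image.mp hr
    have := hsub ha
    rw [board, Finset.mem_filter, Finset.mem_product] at this
    exact this.1.1
  have := Finset.card_le_card h2
  rw [h1, hcard, Nat.card_Icc] at this
  omega

lemma aux_qFact_zero (q : K) : qFact q 0 = 1 := by simp [qFact, qFall]

lemma aux_qBinom_self (q : K) (hq1 : ∀ j : ℕ, 0 < j → q ^ j ≠ 1) (k : ℕ) :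
    qBinom q k k = 1 := by
  rw [qBinom, Nat.sub_self, aux_qFact_zero, mul_one,
    div_self (aux_qFact_ne_zero q hq1 k)]

/-- For `λ ⊆ n×m` with `k = ℓ(λ)`:
`qbinom(m-k,n-k) H_k^{m+n-k,m+n-k}(λ) = q^{k(n-k)} [m+n-2k]_{m-k} H_k^{m,n}(λ)`. -/
theorem stmt16 (q : K) (hq0 : q ≠ 0) (hq1 : ∀ j : ℕ, 0 < j → q ^ j ≠ 1)
    (m n k : ℕ) (lam : ℕ → ℕ) (hnm : n ≤ m) (hpart : IsPartitionIn lam k n m) :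
    qBinom q (m - k) (n - k) * qHit q (m + n - k) (m + n - k) lam k k =
      q ^ (k * (n - k)) * qFall q ((m : ℤ) + (n : ℤ) - 2 * k) (m - k) *
        qHit q m n lam k k := by
  obtain ⟨hpt, hkn, hlam1⟩ := hpart
  have hkm : k ≤ m := hkn.trans hnm
  -- collapse the two sums to the single `i = k` term
  have hterm : ∀ (M N : ℕ), k ≤ N →
      (∑ i ∈ Finset.Icc k N, qRook q lam k i * qFact q (M - i) * qBinom q i k *
        (-1 : K) ^ (i + k) * q ^ ((M : ℤ) * (i : ℤ) - (i.choose 2 : ℤ))) =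
      qRook q lam k k * qFact q (M - k) * q ^ ((M : ℤ) * (k : ℤ) - (k.choose 2 : ℤ)) := by
    intro M N hN
    rw [Finset.sum_eq_single_of_mem k (Finset.mem_Icc.mpr ⟨le_rfl, hN⟩)]
    · rw [aux_qBinom_self q hq1 k, Even.neg_one_pow ⟨k, rfl⟩]
      ring
    · intro i hi hik
      have : k < i := lt_of_le_of_ne (Finset.mem_Icc.mp hi).1 (Ne.symm hik)
      rw [aux_qRook_eq_zero q lam k i this]
      ring
  have h1 : qHit q (m + n - k) (m + n - k) lam k k =
      q ^ ((k.choose 2 : ℤ) - (pSize lam k : ℤ)) *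
        (qRook q lam k k * qFact q (m + n - k - k) *
          q ^ (((m + n - k : ℕ) : ℤ) * (k : ℤ) - (k.choose 2 : ℤ))) := by
    rw [qHit, Nat.sub_self, aux_qFact_zero, div_one, hterm _ _ (by omega)]
  have h2 : qHit q m n lam k k =
      q ^ ((k.choose 2 : ℤ) - (pSize lam k : ℤ)) / qFact q (m - n) *
        (qRook q lam k k * qFact q (m - k) *
          q ^ ((m : ℤ) * (k : ℤ) - (k.choose 2 : ℤ))) := by
    rw [qHit, hterm _ _ hkn]
  rw [h1, h2]
  -- split the big factorial
  have hMk : m + n - k - k = (m - k) + (n - k) := by omega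
  have hcast1 : (((m - k : ℕ) + (n - k : ℕ) : ℕ) : ℤ) = (m : ℤ) + (n : ℤ) - 2 * k := by
    omega
  have hcast2 : (((m - k : ℕ) + (n - k : ℕ) : ℕ) : ℤ) - ((m - k : ℕ) : ℤ) =
      ((n - k : ℕ) : ℤ) := by omega
  have hsplit : qFact q (m + n - k - k) =
      qFall q ((m : ℤ) + (n : ℤ) - 2 * k) (m - k) * qFact q (n - k) := by
    rw [hMk, qFact, aux_qFall_add, hcast1, qFact]
    congr 2
    omega
  -- combine powers of q
  have hpow : q ^ (((m + n - k : ℕ) : ℤ) * (k : ℤ) - (k.choose 2 : ℤ)) =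
      q ^ (k * (n - k)) * q ^ ((m : ℤ) * (k : ℤ) - (k.choose 2 : ℤ)) := by
    rw [← zpow_natCast q (k * (n - k)), ← zpow_add₀ hq0]
    congr 1
    have : ((m + n - k : ℕ) : ℤ) = (m : ℤ) + n - k := by omega
    rw [this, Nat.cast_mul, Nat.cast_sub hkn]
    ring
  have hBdef : qBinom q (m - k) (n - k) =
      qFact q (m - k) / (qFact q (n - k) * qFact q (m - n)) := by
    rw [qBinom]
    congr 3
    omega
  rw [hsplit, hpow, hBdef]
  have hnk := aux_qFact_ne_zero q hq1 (n - k)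
  have hmn := aux_qFact_ne_zero q hq1 (m - n)
  field_simp
end
end
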